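/- arXiv:math/0204192 — 4 statements merged into one kernel-verified Lean document; each statement's English description precedes it below -/
import Mathlib

section
/- Let G be a group with subgroups A and B where B is normal in G. Let C_j denote the lower central series of G (C_0 = G, C_{j+1} = [G, C_j]), and set A_j = A ∩ C_j, B_j = B ∩ C_j. Then the commutator subgroup [AB, A_jB_j] is contained in A_{j+1}B_{j+1}. -/
open Pointwise

/-- Let `G` be a group with subgroups `A` and `B`, `B` normal in `G`. With `C j` the
lower central series of `G` (`C 0 = G`, `C (j+1) = ⁅G, C j⁆`), `A_j = A ⊓ C j`,
`B_j = B ⊓ C j`, the commutator subgroup `⁅AB, A_jB_j⁆` is contained in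
`A_{j+1}B_{j+1}`.  Since `B` (and hence each `B_j`) is normal, the set product
`A_j * B_j` coincides with the subgroup `A_j ⊔ B_j`; we state both the elementwise
claim for the set products and the commutator-subgroup claim. -/
theorem stmt0 {G : Type*} [Group G] (A B : Subgroup G) (hB : B.Normal) (j : ℕ) :
    (∀ g ∈ (A : Set G) * (B : Set G),
      ∀ h ∈ ((A ⊓ (⊤ : Subgroup G).lowerCentralSeries j : Subgroup G) : Set G) *
          ((B ⊓ (⊤ : Subgroup G).lowerCentralSeries j : Subgroup G) : Set G),
        g * h * g⁻¹ * h⁻¹ ∈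
          ((A ⊓ (⊤ : Subgroup G).lowerCentralSeries (j + 1) : Subgroup G) : Set G) *
            ((B ⊓ (⊤ : Subgroup G).lowerCentralSeries (j + 1) : Subgroup G) : Set G)) ∧
    ⁅A ⊔ B, (A ⊓ (⊤ : Subgroup G).lowerCentralSeries j) ⊔ (B ⊓ (⊤ : Subgroup G).lowerCentralSeries j)⁆ ≤
      (A ⊓ (⊤ : Subgroup G).lowerCentralSeries (j + 1)) ⊔ (B ⊓ (⊤ : Subgroup G).lowerCentralSeries (j + 1)) := by
  haveI := hB
  -- key elementwise claim
  have key : ∀ g ∈ (A : Set G) * (B : Set G),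
      ∀ h ∈ ((A ⊓ (⊤ : Subgroup G).lowerCentralSeries j : Subgroup G) : Set G) *
          ((B ⊓ (⊤ : Subgroup G).lowerCentralSeries j : Subgroup G) : Set G),
        g * h * g⁻¹ * h⁻¹ ∈
          ((A ⊓ (⊤ : Subgroup G).lowerCentralSeries (j + 1) : Subgroup G) : Set G) *
            ((B ⊓ (⊤ : Subgroup G).lowerCentralSeries (j + 1) : Subgroup G) : Set G) := by
    rintro g ⟨a, ha, b, hb, rfl⟩ h ⟨a', ha', b', hb', rfl⟩
    obtain ⟨ha'A, ha'C⟩ := ha'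
    obtain ⟨hb'B, hb'C⟩ := hb'
    -- h ∈ C j
    have hhC : a' * b' ∈ (⊤ : Subgroup G).lowerCentralSeries j := mul_mem ha'C hb'C
    -- x = ⁅a, a'⁆
    have hxA : a * a' * a⁻¹ * a'⁻¹ ∈ A :=
      mul_mem (mul_mem (mul_mem ha ha'A) (inv_mem ha)) (inv_mem ha'A)
    have hcomm : ∀ (p q : G), q ∈ (⊤ : Subgroup G).lowerCentralSeries j →
        p * q * p⁻¹ * q⁻¹ ∈ (⊤ : Subgroup G).lowerCentralSeries (j + 1) := by
      intro p q hq
      open scoped commutatorElement in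
      have : ⁅q, p⁆ ∈ (⊤ : Subgroup G).lowerCentralSeries (j + 1) :=
        Subgroup.commutator_mem_commutator hq (Subgroup.mem_top p)
      open scoped commutatorElement in
      have h2 : ⁅p, q⁆ ∈ (⊤ : Subgroup G).lowerCentralSeries (j + 1) := by
        have := inv_mem this
        rwa [← commutatorElement_inv, inv_inv] at this
      simpa [commutatorElement_def, mul_assoc] using h2
    have hxC : a * a' * a⁻¹ * a'⁻¹ ∈ (⊤ : Subgroup G).lowerCentralSeries (j + 1) := hcomm a a' ha'C
    have hyC : (a * a' * a⁻¹ * a'⁻¹)⁻¹ *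
        (a * b * (a' * b') * (a * b)⁻¹ * (a' * b')⁻¹) ∈ (⊤ : Subgroup G).lowerCentralSeries (j + 1) :=
      mul_mem (inv_mem hxC) (hcomm (a * b) (a' * b') hhC)
    have hyB : (a * a' * a⁻¹ * a'⁻¹)⁻¹ *
        (a * b * (a' * b') * (a * b)⁻¹ * (a' * b')⁻¹) ∈ B := by
      rw [← QuotientGroup.eq_one_iff]
      have hb0 : (b : G ⧸ B) = 1 := (QuotientGroup.eq_one_iff b).2 hb
      have hb'0 : (b' : G ⧸ B) = 1 := (QuotientGroup.eq_one_iff b').2 hb'B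
      simp only [QuotientGroup.mk_mul, QuotientGroup.mk_inv, hb0, hb'0]
      group
    refine ⟨_, ⟨hxA, hxC⟩, _, ⟨hyB, hyC⟩, ?_⟩
    group
  refine ⟨key, ?_⟩
  rw [Subgroup.commutator_le]
  intro g hg h hh
  have hg' : g ∈ (A : Set G) * (B : Set G) := by
    rwa [← Subgroup.mul_normal, SetLike.mem_coe]
  have hh' : h ∈ ((A ⊓ (⊤ : Subgroup G).lowerCentralSeries j : Subgroup G) : Set G) *
      ((B ⊓ (⊤ : Subgroup G).lowerCentralSeries j : Subgroup G) : Set G) := by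
    rwa [← Subgroup.mul_normal, SetLike.mem_coe]
  have := key g hg' h hh'
  rw [← Subgroup.mul_normal] at this
  simpa [commutatorElement_def, mul_assoc] using this
end

section
/- Let V be a nonzero finite-dimensional real vector space, f : V → V a linear automorphism having no complex eigenvalue of absolute value 1, and Γ ⊂ V a full-rank lattice with f(Γ) = Γ. Let V^s = {v ∈ V : fⁿ(v) → 0 as n → ∞} be the stable subspace. Then the image of Γ in the quotient W = V / V^s is dense. -/
open Filter Topology
open scoped TensorProduct

private lemma aux_scalar (j : ℕ) {μ : ℂ} (hμ : ‖μ‖ < 1) :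
    Tendsto (fun n : ℕ => (n.choose j : ℂ) * μ ^ (n - j)) atTop (𝓝 0) := by
  rcases eq_or_ne μ 0 with rfl | hμ0
  · apply Tendsto.congr' _ (tendsto_const_nhds (f := atTop) (x := (0:ℂ)))
    filter_upwards [eventually_ge_atTop (j + 1)] with n hn
    rw [zero_pow (by omega), mul_zero]
  · have hsumm : Summable (fun n : ℕ => (n : ℝ) ^ j * ‖μ‖ ^ n) := by
      have := summable_norm_pow_mul_geometric_of_norm_lt_one (R := ℝ) j
        (r := ‖μ‖) (by simpa using hμ)
      exact this.of_norm
    have h1 : Tendsto (fun n : ℕ => (n : ℝ) ^ j * ‖μ‖ ^ n) atTop (𝓝 0) :=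
      hsumm.tendsto_atTop_zero
    have h2 : Tendsto (fun n : ℕ => (‖μ‖ ^ j)⁻¹ * ((n : ℝ) ^ j * ‖μ‖ ^ n)) atTop (𝓝 0) := by
      simpa using h1.const_mul ((‖μ‖ ^ j)⁻¹)
    apply squeeze_zero_norm' _ h2
    filter_upwards [eventually_ge_atTop j] with n hn
    have hμn : ‖μ‖ ≠ 0 := by simpa using hμ0
    have : ‖(n.choose j : ℂ) * μ ^ (n - j)‖ = (n.choose j : ℝ) * ‖μ‖ ^ (n - j) := by
      simp [norm_mul, norm_pow]
    rw [this, pow_sub₀ _ hμn hn]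
    have hle : (n.choose j : ℝ) ≤ (n : ℝ) ^ j := by
      exact_mod_cast Nat.choose_le_pow n j
    calc (n.choose j : ℝ) * (‖μ‖ ^ n / ‖μ‖ ^ j)
        ≤ (n : ℝ) ^ j * (‖μ‖ ^ n / ‖μ‖ ^ j) := by
          apply mul_le_mul_of_nonneg_right hle
          positivity
      _ = (‖μ‖ ^ j)⁻¹ * ((n : ℝ) ^ j * ‖μ‖ ^ n) := by ring

private lemma aux_contract {M : Type*} [AddCommGroup M] [Module ℝ M] [Module ℂ M]
    [IsScalarTower ℝ ℂ M]
    {V : Type*} [NormedAddCommGroup V] [NormedSpace ℝ V]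
    (F : Module.End ℂ M) (T : V →ₗ[ℝ] V) (r : M →ₗ[ℝ] V)
    (hcomm : ∀ x, r (F x) = T (r x)) {μ : ℂ} (hμ : ‖μ‖ < 1) {k : ℕ} {x : M}
    (hx : ((F - μ • 1) ^ k) x = 0) :
    Tendsto (fun n : ℕ => (T ^ n) (r x)) atTop (𝓝 0) := by
  set N : Module.End ℂ M := F - μ • 1 with hNdef
  have hFn : ∀ (n : ℕ) (y : M), r ((F ^ n) y) = (T ^ n) (r y) := by
    intro n
    induction n with
    | zero => intro y; simp
    | succ n ih =>
        intro y
        rw [pow_succ, pow_succ, Module.End.mul_apply, Module.End.mul_apply, ih, hcomm]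
  have hkey : ∀ n : ℕ, k ≤ n → (F ^ n) x =
      ∑ j ∈ Finset.range k, ((n.choose j : ℂ) * μ ^ (n - j)) • ((N ^ j) x) := by
    intro n hn
    have hFNμ : F = N + μ • 1 := by rw [hNdef]; abel
    have hco : Commute N (μ • (1 : Module.End ℂ M)) := (Commute.one_right N).smul_right μ
    have hbig : (F ^ n) x =
        ∑ j ∈ Finset.range (n + 1), ((n.choose j : ℂ) * μ ^ (n - j)) • ((N ^ j) x) := by
      conv_lhs => rw [hFNμ, hco.add_pow]
      rw [LinearMap.sum_apply]
      refine Finset.sum_congr rfl fun j hj => ?_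
      rw [smul_pow, one_pow]
      simp only [Module.End.mul_apply, LinearMap.smul_apply, Module.End.one_apply,
        Module.End.natCast_apply, map_smul]
      rw [map_nsmul, ← Nat.cast_smul_eq_nsmul ℂ (n.choose j), smul_smul, mul_comm (μ ^ (n-j))]
    rw [hbig]
    refine (Finset.sum_subset (Finset.range_subset_range.mpr (by omega)) fun m hm hmk => ?_).symm
    have hkm : k ≤ m := by simpa using Nat.le_of_not_lt (by simpa using hmk)
    have : (N ^ m) x = 0 := by
      have : N ^ m = N ^ (m - k) * N ^ k := by rw [← pow_add, Nat.sub_add_cancel hkm]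
      rw [this, Module.End.mul_apply, hx, map_zero]
    rw [this, smul_zero]
  set φ : ℕ → ℂ →ₗ[ℝ] V :=
    fun j => r ∘ₗ ((LinearMap.toSpanSingleton ℂ M ((N ^ j) x)).restrictScalars ℝ) with hφdef
  have hφ : ∀ (j : ℕ) (z : ℂ), φ j z = r (z • ((N ^ j) x)) := fun j z => rfl
  have htend : Tendsto (fun n : ℕ =>
      ∑ j ∈ Finset.range k, φ j ((n.choose j : ℂ) * μ ^ (n - j))) atTop (𝓝 0) := by
    have : Tendsto (fun n : ℕ =>
        ∑ j ∈ Finset.range k, φ j ((n.choose j : ℂ) * μ ^ (n - j))) atTop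
        (𝓝 (∑ j ∈ Finset.range k, 0)) := by
      apply tendsto_finset_sum
      intro j hj
      have hcont : Continuous (φ j) := (φ j).continuous_of_finiteDimensional
      have := (hcont.tendsto 0).comp (aux_scalar j hμ)
      simpa [Function.comp_def, map_zero] using this
    simpa using this
  apply Tendsto.congr' _ htend
  filter_upwards [eventually_ge_atTop k] with n hn
  rw [← hFn n x, hkey n hn, map_sum]
  refine Finset.sum_congr rfl fun j hj => ?_
  exact (hφ j _).symm

/-- Let `V` be a nonzero finite-dimensional real vector space, `f : V ≃ V` a linear
automorphism having no complex eigenvalue of absolute value `1` (eigenvalues being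
those of the complexification of `f` on `ℂ ⊗[ℝ] V`), and `Γ ⊂ V` a full-rank lattice
(the `ℤ`-span of an `ℝ`-basis) with `f (Γ) = Γ`.  Let
`V^s = {v ∈ V : fⁿ v → 0 as n → ∞}` be the stable subspace.  Then the image of `Γ`
in the quotient `W = V ⧸ V^s` is dense. -/
theorem stmt1 {V : Type*} [NormedAddCommGroup V] [NormedSpace ℝ V]
    [FiniteDimensional ℝ V] [Nontrivial V]
    (f : V ≃ₗ[ℝ] V)
    (heig : ∀ z : ℂ, Module.End.HasEigenvalue
      (LinearMap.baseChange ℂ (f : V →ₗ[ℝ] V)) z → ‖z‖ ≠ 1)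
    {ι : Type*} [Fintype ι] (b : Module.Basis ι ℝ V) (Γ : Submodule ℤ V)
    (hΓ : Γ = Submodule.span ℤ (Set.range ⇑b))
    (hf : Submodule.map ((f : V →ₗ[ℝ] V).restrictScalars ℤ) Γ = Γ)
    (Vs : Submodule ℝ V)
    (hVs : ∀ v : V, v ∈ Vs ↔ Tendsto (fun n : ℕ => (f ^ n) v) atTop (𝓝 0)) :
    Dense (Vs.mkQ '' (Γ : Set V)) := by
  classical
  set fl : V →ₗ[ℝ] V := (f : V →ₗ[ℝ] V) with hfl
  set fsl : V →ₗ[ℝ] V := (f.symm : V →ₗ[ℝ] V) with hfsl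
  have hfsl_fl : ∀ v, fsl (fl v) = v := fun v => f.symm_apply_apply v
  have hfl_fsl : ∀ v, fl (fsl v) = v := fun v => f.apply_symm_apply v
  have hmul1 : fl * fsl = 1 := by
    ext v; simp [Module.End.mul_apply, hfl_fsl]
  have hmul1' : fsl * fl = 1 := by
    ext v; simp [Module.End.mul_apply, hfsl_fl]
  have hVs' : ∀ v : V, v ∈ Vs ↔ Tendsto (fun n : ℕ => (fl ^ n) v) atTop (𝓝 0) := by
    intro v
    rw [hVs]
    apply Iff.of_eq
    congr 1
    funext n
    rw [Module.End.pow_apply, LinearEquiv.pow_apply]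
    rfl
  -- the unstable subspace
  let Vu : Submodule ℝ V :=
    { carrier := {v | Tendsto (fun n : ℕ => (fsl ^ n) v) atTop (𝓝 0)}
      add_mem' := fun {a c} ha hc => by
        have := ha.add hc
        simp only [Set.mem_setOf_eq, map_add]
        exact (by simpa using this)
      zero_mem' := by
        simp only [Set.mem_setOf_eq, map_zero]
        exact tendsto_const_nhds
      smul_mem' := fun c v hv => by
        have := hv.const_smul c
        simpa [map_smul] using this }
  have hVumem : ∀ v : V, v ∈ Vu ↔ Tendsto (fun n : ℕ => (fsl ^ n) v) atTop (𝓝 0) :=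
    fun v => Iff.rfl
  -- complexification
  set F : Module.End ℂ (ℂ ⊗[ℝ] V) := LinearMap.baseChange ℂ fl with hFdef
  set G : Module.End ℂ (ℂ ⊗[ℝ] V) := LinearMap.baseChange ℂ fsl with hGdef
  have hFG : F * G = 1 := by
    rw [hFdef, hGdef, ← LinearMap.baseChange_mul, hmul1, LinearMap.baseChange_one]
  have hGF : G * F = 1 := by
    rw [hFdef, hGdef, ← LinearMap.baseChange_mul, hmul1', LinearMap.baseChange_one]
  set r : (ℂ ⊗[ℝ] V) →ₗ[ℝ] V :=
    TensorProduct.lift ((LinearMap.lsmul ℝ V).comp Complex.reLm) with hrdef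
  have hrt : ∀ (z : ℂ) (v : V), r (z ⊗ₜ[ℝ] v) = z.re • v := by
    intro z v
    simp [hrdef, TensorProduct.lift.tmul]
  have hr1 : ∀ v : V, r ((1 : ℂ) ⊗ₜ[ℝ] v) = v := by
    intro v; rw [hrt]; simp
  have hrF : ∀ x, r (F x) = fl (r x) := by
    have h : r ∘ₗ (F.restrictScalars ℝ) = fl ∘ₗ r := by
      apply TensorProduct.ext'
      intro z v
      simp [hFdef, LinearMap.baseChange_tmul, hrt, map_smul]
    intro x
    exact LinearMap.congr_fun h x
  have hrG : ∀ x, r (G x) = fsl (r x) := by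
    have h : r ∘ₗ (G.restrictScalars ℝ) = fsl ∘ₗ r := by
      apply TensorProduct.ext'
      intro z v
      simp [hGdef, LinearMap.baseChange_tmul, hrt, map_smul]
    intro x
    exact LinearMap.congr_fun h x
  -- invariance of Vs under fsl
  have hfsl_cont : Continuous fsl := fsl.continuous_of_finiteDimensional
  have hVsinv : ∀ s ∈ Vs, fsl s ∈ Vs := by
    intro s hs
    rw [hVs'] at hs ⊢
    have hC : Commute fsl fl := by
      unfold Commute SemiconjBy
      rw [hmul1', hmul1]
    have heq : (fun n : ℕ => (fl ^ n) (fsl s)) = fun n : ℕ => fsl ((fl ^ n) s) := by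
      funext n
      rw [← Module.End.mul_apply, ← Module.End.mul_apply, (hC.pow_right n).eq]
    rw [heq]
    have := (hfsl_cont.tendsto 0).comp hs
    simpa [Function.comp_def, map_zero] using this
  have hVsinvn : ∀ (n : ℕ) (s : V), s ∈ Vs → (fsl ^ n) s ∈ Vs := by
    intro n
    induction n with
    | zero => intro s hs; simpa using hs
    | succ n ih =>
        intro s hs
        rw [pow_succ, Module.End.mul_apply]
        exact ih _ (hVsinv s hs)
  -- the sum of stable and unstable subspaces is everything
  have hsum : Vs ⊔ Vu = ⊤ := by
    rw [eq_top_iff]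
    rintro v -
    have htop : (1 : ℂ) ⊗ₜ[ℝ] v ∈ (⊤ : Submodule ℂ (ℂ ⊗[ℝ] V)) := Submodule.mem_top
    rw [← Module.End.iSup_maxGenEigenspace_eq_top F] at htop
    have hmem : r ((1 : ℂ) ⊗ₜ[ℝ] v) ∈ Vs ⊔ Vu := by
      refine Submodule.iSup_induction (motive := fun y => r y ∈ Vs ⊔ Vu) _ htop ?_ (by simp) ?_
      · intro μ y hy
        rcases eq_or_ne y 0 with rfl | hy0
        · simp
        obtain ⟨k, hk⟩ := (Module.End.mem_maxGenEigenspace F μ y).mp hy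
        have heigμ : Module.End.HasEigenvalue F μ := by
          apply Module.End.hasEigenvalue_of_hasGenEigenvalue (k := k)
          rw [Module.End.hasGenEigenvalue_iff]
          intro hbot
          have : y ∈ Module.End.genEigenspace F μ k := by
            rw [Module.End.mem_genEigenspace_nat, LinearMap.mem_ker]
            exact hk
          rw [hbot] at this
          exact hy0 (by simpa using this)
        have hμ1 : ‖μ‖ ≠ 1 := heig μ heigμ
        rcases lt_or_gt_of_ne hμ1 with hlt | hgt
        · exact Submodule.mem_sup_left ((hVs' _).mpr (aux_contract F fl r hrF hlt hk))
        · have hμ0 : μ ≠ 0 := by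
            intro h
            rw [h] at hgt
            simp at hgt
            linarith
          have hCGF : Commute G (F - μ • 1) := by
            have h1 : Commute G F := by
              unfold Commute SemiconjBy
              rw [hGF, hFG]
            exact h1.sub_right ((Commute.one_right G).smul_right μ)
          have hid : G - μ⁻¹ • (1 : Module.End ℂ (ℂ ⊗[ℝ] V)) =
              (-μ⁻¹) • (G * (F - μ • 1)) := by
            rw [mul_sub, hGF, mul_smul_comm, mul_one, smul_sub, smul_smul,
              neg_mul, inv_mul_cancel₀ hμ0, neg_smul, neg_smul, one_smul, sub_neg_eq_add,
              neg_add_eq_sub]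
          have hk' : ((G - μ⁻¹ • 1) ^ k) y = 0 := by
            rw [hid, smul_pow, hCGF.mul_pow, LinearMap.smul_apply, Module.End.mul_apply,
              hk, map_zero, smul_zero]
          have hnorm : ‖μ⁻¹‖ < 1 := by
            rw [norm_inv]
            exact inv_lt_one_of_one_lt₀ hgt
          exact Submodule.mem_sup_right ((hVumem _).mpr (aux_contract G fsl r hrG hnorm hk'))
      · intro y z hy hz
        rw [map_add]
        exact Submodule.add_mem _ hy hz
    rw [hr1 v] at hmem
    exact hmem
  -- lattice lemmas
  have hΓinv : ∀ γ ∈ Γ, fsl γ ∈ Γ := by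
    intro γ hγ
    rw [← hf] at hγ
    obtain ⟨δ, hδ, hfd⟩ := hγ
    have : fsl γ = δ := by
      rw [← hfd]
      exact hfsl_fl δ
    rw [this]
    exact hδ
  have hΓinvn : ∀ (n : ℕ) (γ : V), γ ∈ Γ → (fsl ^ n) γ ∈ Γ := by
    intro n
    induction n with
    | zero => intro γ hγ; simpa using hγ
    | succ n ih =>
        intro γ hγ
        rw [pow_succ, Module.End.mul_apply]
        exact ih _ (hΓinv γ hγ)
  have hΓnear : ∀ v : V, ∃ γ ∈ Γ, ∃ t : ι → ℝ,
      (∀ i, |t i| ≤ 1) ∧ v - γ = ∑ i, t i • b i := by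
    intro v
    refine ⟨∑ i, ⌊b.repr v i⌋ • b i, ?_, fun i => Int.fract (b.repr v i), fun i => ?_, ?_⟩
    · rw [hΓ]
      exact Submodule.sum_mem _ fun i _ =>
        Submodule.smul_mem _ _ (Submodule.subset_span ⟨i, rfl⟩)
    · rw [abs_of_nonneg (Int.fract_nonneg _)]
      exact (Int.fract_lt_one _).le
    · have hv := b.sum_repr v
      calc v - ∑ i, ⌊b.repr v i⌋ • b i
          = ∑ i, b.repr v i • b i - ∑ i, (⌊b.repr v i⌋ : ℝ) • b i := by
            rw [hv]
            congr 1
            exact Finset.sum_congr rfl fun i _ => (Int.cast_smul_eq_zsmul ℝ _ _).symm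
        _ = ∑ i, (b.repr v i - (⌊b.repr v i⌋ : ℝ)) • b i := by
            rw [← Finset.sum_sub_distrib]
            exact Finset.sum_congr rfl fun i _ => (sub_smul _ _ _).symm
        _ = ∑ i, Int.fract (b.repr v i) • b i := by
            exact Finset.sum_congr rfl fun i _ => by rw [Int.fract]
  -- pointwise decay in the quotient
  have hq0 : ∀ v : V, Tendsto
      (fun n : ℕ => ‖(Vs.mkQ ((fsl ^ n) v) : V ⧸ Vs)‖) atTop (𝓝 0) := by
    intro v
    have hvtop : v ∈ Vs ⊔ Vu := by rw [hsum]; exact Submodule.mem_top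
    obtain ⟨s, hs, u, hu, hsu⟩ := Submodule.mem_sup.mp hvtop
    have hnorm : ∀ n : ℕ, ‖(Vs.mkQ ((fsl ^ n) v) : V ⧸ Vs)‖ ≤ ‖(fsl ^ n) u‖ := by
      intro n
      have h1 : (Vs.mkQ ((fsl ^ n) v) : V ⧸ Vs) = Vs.mkQ ((fsl ^ n) u) := by
        rw [Submodule.mkQ_apply, Submodule.mkQ_apply, Submodule.Quotient.eq, ← map_sub]
        have hvu : v - u = s := by rw [← hsu]; abel
        rw [hvu]
        exact hVsinvn n s hs
      rw [h1, Submodule.mkQ_apply]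
      exact Submodule.Quotient.norm_mk_le Vs _
    have hu' : Tendsto (fun n : ℕ => ‖(fsl ^ n) u‖) atTop (𝓝 0) := by
      rw [← tendsto_zero_iff_norm_tendsto_zero]
      exact (hVumem u).mp hu
    exact squeeze_zero (fun n => norm_nonneg _) hnorm hu'
  -- conclusion
  intro w
  rw [Metric.mem_closure_iff]
  intro ε hε
  have hS : Tendsto (fun n : ℕ => ∑ i, ‖(Vs.mkQ ((fsl ^ n) (b i)) : V ⧸ Vs)‖)
      atTop (𝓝 0) := by
    have := tendsto_finset_sum (Finset.univ : Finset ι) (fun i _ => hq0 (b i))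
    simpa using this
  obtain ⟨n, hn⟩ := (hS.eventually_lt_const hε).exists
  obtain ⟨u, hu⟩ := Vs.mkQ_surjective w
  obtain ⟨γ, hγΓ, t, ht, hrep⟩ := hΓnear ((fl ^ n) u)
  refine ⟨Vs.mkQ ((fsl ^ n) γ), ⟨(fsl ^ n) γ, hΓinvn n γ hγΓ, rfl⟩, ?_⟩
  have hCC : Commute fsl fl := by
    unfold Commute SemiconjBy
    rw [hmul1', hmul1]
  have hcancel : (fsl ^ n) ((fl ^ n) u) = u := by
    have h1 : fsl ^ n * fl ^ n = 1 := by
      rw [← hCC.mul_pow, hmul1', one_pow]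
    calc (fsl ^ n) ((fl ^ n) u) = (fsl ^ n * fl ^ n) u := (Module.End.mul_apply _ _ _).symm
      _ = u := by rw [h1]; rfl
  have hw : w = Vs.mkQ ((fsl ^ n) ((fl ^ n) u)) := by rw [hcancel, hu]
  rw [dist_eq_norm, hw]
  have hdiff : Vs.mkQ ((fsl ^ n) ((fl ^ n) u)) - Vs.mkQ ((fsl ^ n) γ)
      = ∑ i, t i • (Vs.mkQ ((fsl ^ n) (b i)) : V ⧸ Vs) := by
    rw [← map_sub, ← map_sub, hrep, map_sum, map_sum]
    exact Finset.sum_congr rfl fun i _ => by rw [map_smul, map_smul]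
  rw [hdiff]
  calc ‖∑ i, t i • (Vs.mkQ ((fsl ^ n) (b i)) : V ⧸ Vs)‖
      ≤ ∑ i, ‖t i • (Vs.mkQ ((fsl ^ n) (b i)) : V ⧸ Vs)‖ := norm_sum_le _ _
    _ ≤ ∑ i, ‖(Vs.mkQ ((fsl ^ n) (b i)) : V ⧸ Vs)‖ := by
        refine Finset.sum_le_sum fun i _ => ?_
        rw [norm_smul, Real.norm_eq_abs]
        exact mul_le_of_le_one_left (norm_nonneg _) (ht i)
    _ < ε := hn
end

section
/- Let 𝔤 be a real Lie algebra and f : 𝔤 → 𝔤 a Lie algebra automorphism with no complex eigenvalue of absolute value 1. Define 𝔤^u (resp. 𝔤^s) as the intersection of 𝔤 with the sum of generalized eigenspaces of f on 𝔤 ⊗ ℂ for eigenvalues of absolute value > 1 (resp. < 1). Then 𝔤^u and 𝔤^s are Lie subalgebras of 𝔤, they are f-invariant, and 𝔤 = 𝔤^u ⊕ 𝔤^s as vector spaces. -/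
open TensorProduct

attribute [-instance] LieAlgebra.ExtendScalars.instBracketTensorProduct

/- ### Auxiliary general lemmas -/

lemma aux_disjoint_biSup {ι R N : Type*} [Ring R] [AddCommGroup N] [Module R N]
    {p : ι → Submodule R N} (h : iSupIndep p) {S T : Set ι} (hST : Disjoint S T) :
    Disjoint (⨆ i ∈ S, p i) (⨆ i ∈ T, p i) := by
  classical
  rw [Submodule.disjoint_def]
  intro x hxS hxT
  rw [Submodule.mem_biSup_iff_exists_dfinsupp] at hxS hxT
  obtain ⟨f, hf⟩ := hxS
  obtain ⟨g, hg⟩ := hxT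
  have hinj := h.dfinsupp_lsum_injective
  have he : DFinsupp.filter (· ∈ S) f = DFinsupp.filter (· ∈ T) g := hinj (by rw [hf, hg])
  have h0 : DFinsupp.filter (· ∈ S) f = 0 := by
    ext i
    by_cases hiS : i ∈ S
    · have hiT : i ∉ T := Set.disjoint_left.mp hST hiS
      have := congrFun (congrArg DFunLike.coe he) i
      simp only [DFinsupp.filter_apply, hiS, hiT, if_pos, if_neg, if_true, if_false] at this ⊢
      simp [this]
    · simp [DFinsupp.filter_apply, hiS]
  rw [← hf, h0, map_zero]

lemma aux_biSup_elim {R N : Type*} [Ring R] [AddCommGroup N] [Module R N]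
    {ι : Type*} {q : ι → Submodule R N} {S : Set ι} {C : N → Prop}
    (h0 : C 0) (hadd : ∀ a b, C a → C b → C (a + b))
    (hmem : ∀ z ∈ S, ∀ v ∈ q z, C v) : ∀ v ∈ ⨆ z ∈ S, q z, C v := by
  intro v hv
  rw [iSup_subtype'] at hv
  exact Submodule.iSup_induction' (motive := fun x _ => C x) _
    (fun i x hx => hmem i.1 i.2 x hx) h0 (fun x y _ _ hx hy => hadd x y hx hy) hv

lemma aux_lie_mem_maxGen {R L : Type*} [CommRing R] [LieRing L] [LieAlgebra R L]
    (F : Module.End R L) (hF : ∀ v w : L, F ⁅v, w⁆ = ⁅F v, F w⁆) {a b : R} {v w : L}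
    (hv : v ∈ F.maxGenEigenspace a) (hw : w ∈ F.maxGenEigenspace b) :
    ⁅v, w⁆ ∈ F.maxGenEigenspace (a * b) := by
  rw [Module.End.mem_maxGenEigenspace] at hv hw ⊢
  obtain ⟨k₁, hk₁⟩ := hv
  obtain ⟨k₂, hk₂⟩ := hw
  have hcomm : ∀ (c : R), Commute F (F - c • (1 : Module.End R L)) := by
    intro c
    refine (Commute.refl F).sub_right ?_
    ext u; simp [Module.End.mul_apply]
  have key : ∀ n k₁ k₂ : ℕ, k₁ + k₂ = n → ∀ v w : L,
      ((F - a • (1 : Module.End R L)) ^ k₁) v = 0 →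
      ((F - b • (1 : Module.End R L)) ^ k₂) w = 0 →
      ((F - (a * b) • (1 : Module.End R L)) ^ n) ⁅v, w⁆ = 0 := by
    intro n
    induction n with
    | zero =>
      intro k₁ k₂ hk v w hv hw
      obtain ⟨h1, h2⟩ : k₁ = 0 ∧ k₂ = 0 := by omega
      subst h1
      simp only [pow_zero, Module.End.one_apply] at hv ⊢
      simp [hv]
    | succ n ih =>
      intro k₁ k₂ hk v w hv hw
      cases k₁ with
      | zero =>
        simp only [pow_zero, Module.End.one_apply] at hv
        simp [hv]
      | succ a' =>
        cases k₂ with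
        | zero =>
          simp only [pow_zero, Module.End.one_apply] at hw
          simp [hw]
        | succ b' =>
          have step : (F - (a * b) • (1 : Module.End R L)) ⁅v, w⁆ =
              ⁅(F - a • (1 : Module.End R L)) v, F w⁆ +
                a • ⁅v, (F - b • (1 : Module.End R L)) w⁆ := by
            simp only [LinearMap.sub_apply, LinearMap.smul_apply, Module.End.one_apply,
              sub_lie, lie_sub, lie_smul, smul_lie, smul_sub, smul_smul, hF]
            abel
          rw [pow_succ, Module.End.mul_apply, step, map_add, map_smul]
          have t1 : ((F - (a * b) • (1 : Module.End R L)) ^ n)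
              ⁅(F - a • (1 : Module.End R L)) v, F w⁆ = 0 := by
            apply ih a' (b' + 1) (by omega)
            · rw [← Module.End.mul_apply, ← pow_succ]; exact hv
            · have : ((F - b • (1 : Module.End R L)) ^ (b' + 1)) (F w)
                  = F (((F - b • (1 : Module.End R L)) ^ (b' + 1)) w) := by
                rw [← Module.End.mul_apply, ← Module.End.mul_apply,
                  (((hcomm b).pow_right (b' + 1)).symm).eq]
              rw [this, hw, map_zero]
          have t2 : ((F - (a * b) • (1 : Module.End R L)) ^ n)
              ⁅v, (F - b • (1 : Module.End R L)) w⁆ = 0 := by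
            apply ih (a' + 1) b' (by omega) _ _ hv
            rw [← Module.End.mul_apply, ← pow_succ]; exact hw
          rw [t1, t2, smul_zero, add_zero]
  exact ⟨k₁ + k₂, key (k₁ + k₂) k₁ k₂ rfl v w hk₁ hk₂⟩

/- ### Complexification helpers -/

section complexify

variable {𝔤 : Type*} [LieRing 𝔤] [LieAlgebra ℝ 𝔤]

noncomputable def auxσ : ℂ ⊗[ℝ] 𝔤 →ₗ[ℝ] ℂ ⊗[ℝ] 𝔤 :=
  TensorProduct.map Complex.conjAe.toLinearMap LinearMap.id

noncomputable def auxjre : ℂ ⊗[ℝ] 𝔤 →ₗ[ℝ] 𝔤 :=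
  TensorProduct.lift ((LinearMap.lsmul ℝ 𝔤).comp Complex.reLm)

noncomputable def auxjim : ℂ ⊗[ℝ] 𝔤 →ₗ[ℝ] 𝔤 :=
  TensorProduct.lift ((LinearMap.lsmul ℝ 𝔤).comp Complex.imLm)

@[simp] lemma auxσ_tmul (z : ℂ) (x : 𝔤) :
    auxσ (z ⊗ₜ[ℝ] x) = (starRingEnd ℂ z) ⊗ₜ[ℝ] x := rfl

@[simp] lemma auxjre_tmul (z : ℂ) (x : 𝔤) : auxjre (z ⊗ₜ[ℝ] x) = z.re • x := rfl
@[simp] lemma auxjim_tmul (z : ℂ) (x : 𝔤) : auxjim (z ⊗ₜ[ℝ] x) = z.im • x := rfl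

@[simp] lemma auxjre_one_tmul (x : 𝔤) : auxjre ((1 : ℂ) ⊗ₜ[ℝ] x) = x := by simp
@[simp] lemma auxjim_one_tmul (x : 𝔤) : auxjim ((1 : ℂ) ⊗ₜ[ℝ] x) = 0 := by simp

@[simp] lemma auxσ_one_tmul (x : 𝔤) : auxσ ((1 : ℂ) ⊗ₜ[ℝ] x) = (1 : ℂ) ⊗ₜ[ℝ] x := by simp

lemma auxσ_smul (c : ℂ) (v : ℂ ⊗[ℝ] 𝔤) : auxσ (c • v) = (starRingEnd ℂ c) • auxσ v := by
  induction v using TensorProduct.induction_on with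
  | zero => simp
  | tmul z x =>
    rw [smul_tmul', auxσ_tmul, auxσ_tmul, smul_tmul']
    simp [smul_eq_mul, map_mul]
  | add u w hu hw => rw [smul_add, map_add, hu, hw, map_add, smul_add]

lemma auxjim_auxσ (v : ℂ ⊗[ℝ] 𝔤) : auxjim (auxσ v) = - auxjim v := by
  induction v using TensorProduct.induction_on with
  | zero => simp
  | tmul z x => simp [Complex.conj_im, neg_smul]
  | add u w hu hw => rw [map_add, map_add, hu, hw, map_add, neg_add]

lemma aux_decomp (v : ℂ ⊗[ℝ] 𝔤) :
    (1 : ℂ) ⊗ₜ[ℝ] (auxjre v) + Complex.I • ((1 : ℂ) ⊗ₜ[ℝ] (auxjim v)) = v := by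
  induction v using TensorProduct.induction_on with
  | zero => simp
  | tmul z x =>
    have h1 : ∀ r : ℝ, r • ((1:ℂ) ⊗ₜ[ℝ] x) = ((r:ℂ)) ⊗ₜ[ℝ] x := fun r => by
      rw [smul_tmul']; norm_num [Complex.real_smul]
    rw [auxjre_tmul, auxjim_tmul, tmul_smul, tmul_smul, h1, h1, smul_tmul', ← add_tmul]
    congr 1
    apply Complex.ext <;> simp
  | add u w hu hw =>
    rw [map_add, map_add, tmul_add, tmul_add, smul_add]
    rw [show (1:ℂ) ⊗ₜ[ℝ] auxjre u + (1:ℂ) ⊗ₜ[ℝ] auxjre w +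
        (Complex.I • ((1:ℂ) ⊗ₜ[ℝ] auxjim u) + Complex.I • ((1:ℂ) ⊗ₜ[ℝ] auxjim w)) =
        ((1:ℂ) ⊗ₜ[ℝ] auxjre u + Complex.I • ((1:ℂ) ⊗ₜ[ℝ] auxjim u)) +
        ((1:ℂ) ⊗ₜ[ℝ] auxjre w + Complex.I • ((1:ℂ) ⊗ₜ[ℝ] auxjim w)) by abel, hu, hw]

lemma aux_fixed_real {v : ℂ ⊗[ℝ] 𝔤} (h : auxσ v = v) : v = (1 : ℂ) ⊗ₜ[ℝ] (auxjre v) := by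
  have h1 : auxjim v = - auxjim v := by conv_lhs => rw [← h, auxjim_auxσ]
  have h2 : auxjim v = 0 := by
    have : (2 : ℝ) • auxjim v = 0 := by rw [two_smul]; nth_rewrite 1 [h1]; abel
    rcases smul_eq_zero.mp this with h | h
    · norm_num at h
    · exact h
  conv_lhs => rw [← aux_decomp v]
  rw [h2, tmul_zero, smul_zero, add_zero]

lemma aux_baseChange_lie (f : 𝔤 →ₗ⁅ℝ⁆ 𝔤) (v w : ℂ ⊗[ℝ] 𝔤) :
    LinearMap.baseChange ℂ (f : 𝔤 →ₗ[ℝ] 𝔤) ⁅v, w⁆ =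
      ⁅LinearMap.baseChange ℂ (f : 𝔤 →ₗ[ℝ] 𝔤) v, LinearMap.baseChange ℂ (f : 𝔤 →ₗ[ℝ] 𝔤) w⁆ := by
  set F := LinearMap.baseChange ℂ (f : 𝔤 →ₗ[ℝ] 𝔤) with hFdef
  induction v using TensorProduct.induction_on with
  | zero =>
    have e1 : ⁅(0 : ℂ ⊗[ℝ] 𝔤), w⁆ = 0 := zero_lie w
    have e2 : ⁅(0 : ℂ ⊗[ℝ] 𝔤), F w⁆ = 0 := zero_lie (F w)
    rw [e1, map_zero, e2]
  | tmul z x =>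
    induction w using TensorProduct.induction_on with
    | zero =>
      have e1 : ⁅z ⊗ₜ[ℝ] x, (0 : ℂ ⊗[ℝ] 𝔤)⁆ = 0 := lie_zero _
      have e2 : ⁅F (z ⊗ₜ[ℝ] x), (0 : ℂ ⊗[ℝ] 𝔤)⁆ = 0 := lie_zero _
      rw [e1, map_zero, e2]
    | tmul z' y =>
      have e1 : ⁅z ⊗ₜ[ℝ] x, z' ⊗ₜ[ℝ] y⁆ = (z * z') ⊗ₜ[ℝ] ⁅x, y⁆ := rfl
      rw [hFdef, e1, LinearMap.baseChange_tmul]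
      exact congrArg (fun t => (z * z') ⊗ₜ[ℝ] t) (f.map_lie x y)
    | add w₁ w₂ h₁ h₂ => rw [lie_add, map_add, h₁, h₂, map_add, lie_add]
  | add v₁ v₂ h₁ h₂ => rw [add_lie, map_add, h₁, h₂, map_add, add_lie]

lemma auxσ_comm (f : 𝔤 →ₗ[ℝ] 𝔤) (v : ℂ ⊗[ℝ] 𝔤) :
    auxσ (LinearMap.baseChange ℂ f v) = LinearMap.baseChange ℂ f (auxσ v) := by
  induction v using TensorProduct.induction_on with
  | zero => simp
  | tmul z x => rfl
  | add u w hu hw => rw [map_add, map_add, hu, hw, map_add, map_add]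

lemma auxσ_maxGen (f : 𝔤 →ₗ[ℝ] 𝔤) {z : ℂ} {v : ℂ ⊗[ℝ] 𝔤}
    (hv : v ∈ Module.End.maxGenEigenspace (LinearMap.baseChange ℂ f) z) :
    auxσ v ∈ Module.End.maxGenEigenspace (LinearMap.baseChange ℂ f) (starRingEnd ℂ z) := by
  set F := LinearMap.baseChange ℂ f with hFdef
  rw [Module.End.mem_maxGenEigenspace] at hv ⊢
  obtain ⟨k, hk⟩ := hv
  refine ⟨k, ?_⟩
  have main : ∀ (k : ℕ) (v : ℂ ⊗[ℝ] 𝔤),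
      ((F - (starRingEnd ℂ z) • (1 : Module.End ℂ (ℂ ⊗[ℝ] 𝔤))) ^ k) (auxσ v)
        = auxσ (((F - z • (1 : Module.End ℂ (ℂ ⊗[ℝ] 𝔤))) ^ k) v) := by
    intro k
    induction k with
    | zero => intro v; simp
    | succ k ih =>
      intro v
      have e1 : (F - (starRingEnd ℂ z) • (1 : Module.End ℂ (ℂ ⊗[ℝ] 𝔤))) (auxσ v)
          = auxσ ((F - z • (1 : Module.End ℂ (ℂ ⊗[ℝ] 𝔤))) v) := by
        simp only [LinearMap.sub_apply, LinearMap.smul_apply, Module.End.one_apply]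
        rw [map_sub, auxσ_smul, auxσ_comm]
      rw [pow_succ, Module.End.mul_apply, e1, ih, ← Module.End.mul_apply, ← pow_succ]
  rw [main, hk, map_zero]

end complexify

/- ### Main theorem -/

/-- Let `𝔤` be a real Lie algebra and `f : 𝔤 → 𝔤` a Lie algebra automorphism with no
complex eigenvalue of absolute value `1`.  Define `𝔤^u` (resp. `𝔤^s`) as the
intersection of `𝔤` (embedded in `ℂ ⊗[ℝ] 𝔤` by `x ↦ 1 ⊗ x`) with the sum of the
generalized eigenspaces of the complexification of `f` for eigenvalues of absolute
value `> 1` (resp. `< 1`).  Then `𝔤^u` and `𝔤^s` are Lie subalgebras of `𝔤`, they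
are `f`-invariant, and `𝔤 = 𝔤^u ⊕ 𝔤^s` as vector spaces. -/
theorem stmt10 {𝔤 : Type*} [LieRing 𝔤] [LieAlgebra ℝ 𝔤] [Module.Finite ℝ 𝔤]
    (f : 𝔤 →ₗ⁅ℝ⁆ 𝔤) (hf : Function.Bijective f)
    (heig : ∀ z : ℂ, Module.End.HasEigenvalue
      (LinearMap.baseChange ℂ (f : 𝔤 →ₗ[ℝ] 𝔤)) z → ‖z‖ ≠ 1) :
    ∃ (gu gs : LieSubalgebra ℝ 𝔤),
      (∀ x : 𝔤, x ∈ gu ↔ (1 : ℂ) ⊗ₜ[ℝ] x ∈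
        ⨆ z ∈ {z : ℂ | 1 < ‖z‖}, Module.End.maxGenEigenspace
          (LinearMap.baseChange ℂ (f : 𝔤 →ₗ[ℝ] 𝔤)) z) ∧
      (∀ x : 𝔤, x ∈ gs ↔ (1 : ℂ) ⊗ₜ[ℝ] x ∈
        ⨆ z ∈ {z : ℂ | ‖z‖ < 1}, Module.End.maxGenEigenspace
          (LinearMap.baseChange ℂ (f : 𝔤 →ₗ[ℝ] 𝔤)) z) ∧
      (∀ x ∈ gu, f x ∈ gu) ∧ (∀ x ∈ gs, f x ∈ gs) ∧
      IsCompl gu.toSubmodule gs.toSubmodule := by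
  classical
  set F : Module.End ℂ (ℂ ⊗[ℝ] 𝔤) := LinearMap.baseChange ℂ (f : 𝔤 →ₗ[ℝ] 𝔤) with hFdef
  set q : ℂ → Submodule ℂ (ℂ ⊗[ℝ] 𝔤) := F.maxGenEigenspace with hqdef
  set Su : Set ℂ := {z : ℂ | 1 < ‖z‖} with hSu
  set Ss : Set ℂ := {z : ℂ | ‖z‖ < 1} with hSs
  set Eu : Submodule ℂ (ℂ ⊗[ℝ] 𝔤) := ⨆ z ∈ Su, q z with hEu
  set Es : Submodule ℂ (ℂ ⊗[ℝ] 𝔤) := ⨆ z ∈ Ss, q z with hEs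
  have hFlie : ∀ v w : ℂ ⊗[ℝ] 𝔤, F ⁅v, w⁆ = ⁅F v, F w⁆ := aux_baseChange_lie f
  -- closure under bracket
  have hbru : ∀ v ∈ Eu, ∀ w ∈ Eu, ⁅v, w⁆ ∈ Eu := by
    refine aux_biSup_elim ?_ ?_ ?_
    · intro w hw; rw [zero_lie]; exact Eu.zero_mem
    · intro a b ha hb w hw; rw [add_lie]; exact Eu.add_mem (ha w hw) (hb w hw)
    · intro z hz v hv
      refine aux_biSup_elim ?_ ?_ ?_
      · rw [lie_zero]; exact Eu.zero_mem
      · intro a b ha hb; rw [lie_add]; exact Eu.add_mem ha hb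
      · intro z' hz' w hw
        have hm : ⁅v, w⁆ ∈ q (z * z') := aux_lie_mem_maxGen F hFlie hv hw
        have hzz : z * z' ∈ Su := by
          simp only [hSu, Set.mem_setOf_eq, norm_mul] at hz hz' ⊢
          nlinarith [norm_nonneg z, norm_nonneg z']
        exact le_biSup q hzz hm
  have hbrs : ∀ v ∈ Es, ∀ w ∈ Es, ⁅v, w⁆ ∈ Es := by
    refine aux_biSup_elim ?_ ?_ ?_
    · intro w hw; rw [zero_lie]; exact Es.zero_mem
    · intro a b ha hb w hw; rw [add_lie]; exact Es.add_mem (ha w hw) (hb w hw)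
    · intro z hz v hv
      refine aux_biSup_elim ?_ ?_ ?_
      · rw [lie_zero]; exact Es.zero_mem
      · intro a b ha hb; rw [lie_add]; exact Es.add_mem ha hb
      · intro z' hz' w hw
        have hm : ⁅v, w⁆ ∈ q (z * z') := aux_lie_mem_maxGen F hFlie hv hw
        have hzz : z * z' ∈ Ss := by
          simp only [hSs, Set.mem_setOf_eq, norm_mul] at hz hz' ⊢
          nlinarith [norm_nonneg z, norm_nonneg z']
        exact le_biSup q hzz hm
  -- invariance of the eigenspace sups under F
  have hFEu : ∀ v ∈ Eu, F v ∈ Eu := by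
    refine aux_biSup_elim ?_ ?_ ?_
    · rw [map_zero]; exact Eu.zero_mem
    · intro a b ha hb; rw [map_add]; exact Eu.add_mem ha hb
    · intro z hz v hv
      exact le_biSup q hz (Module.End.mapsTo_maxGenEigenspace_of_comm (Commute.refl F) z hv)
  have hFEs : ∀ v ∈ Es, F v ∈ Es := by
    refine aux_biSup_elim ?_ ?_ ?_
    · rw [map_zero]; exact Es.zero_mem
    · intro a b ha hb; rw [map_add]; exact Es.add_mem ha hb
    · intro z hz v hv
      exact le_biSup q hz (Module.End.mapsTo_maxGenEigenspace_of_comm (Commute.refl F) z hv)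
  have hFone : ∀ x : 𝔤, F ((1:ℂ) ⊗ₜ[ℝ] x) = (1:ℂ) ⊗ₜ[ℝ] (f x) := by
    intro x; rw [hFdef]; exact LinearMap.baseChange_tmul _ _ _
  -- invariance of the sups under conjugation
  have hσEu : ∀ v ∈ Eu, auxσ v ∈ Eu := by
    refine aux_biSup_elim ?_ ?_ ?_
    · rw [map_zero]; exact Eu.zero_mem
    · intro a b ha hb; rw [map_add]; exact Eu.add_mem ha hb
    · intro z hz v hv
      refine le_biSup q ?_ (auxσ_maxGen (f : 𝔤 →ₗ[ℝ] 𝔤) hv)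
      show 1 < ‖(starRingEnd ℂ) z‖
      rw [starRingEnd_apply, norm_star]
      exact hz
  have hσEs : ∀ v ∈ Es, auxσ v ∈ Es := by
    refine aux_biSup_elim ?_ ?_ ?_
    · rw [map_zero]; exact Es.zero_mem
    · intro a b ha hb; rw [map_add]; exact Es.add_mem ha hb
    · intro z hz v hv
      refine le_biSup q ?_ (auxσ_maxGen (f : 𝔤 →ₗ[ℝ] 𝔤) hv)
      show ‖(starRingEnd ℂ) z‖ < 1
      rw [starRingEnd_apply, norm_star]
      exact hz
  -- disjointness and fullness
  have hdisj : Disjoint Eu Es := by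
    refine aux_disjoint_biSup (Module.End.independent_maxGenEigenspace F) ?_
    rw [Set.disjoint_left]
    intro z h1 h2
    simp only [hSu, hSs, Set.mem_setOf_eq] at h1 h2
    linarith
  have htop : Eu ⊔ Es = ⊤ := by
    rw [eq_top_iff, ← Module.End.iSup_maxGenEigenspace_eq_top F]
    apply iSup_le
    intro z
    rcases lt_trichotomy ‖z‖ 1 with h | h | h
    · exact le_trans (le_biSup q h) le_sup_right
    · have hbot : q z = ⊥ := by
        by_contra hne
        exact heig z (Module.End.HasUnifEigenvalue.lt (by norm_num) hne) h
      rw [hqdef] at hbot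
      show Module.End.maxGenEigenspace F z ≤ Eu ⊔ Es
      rw [hbot]
      exact bot_le
    · exact le_trans (le_biSup q h) le_sup_left
  -- the subalgebras
  have hone : ∀ x y : 𝔤, (1 : ℂ) ⊗ₜ[ℝ] ⁅x, y⁆ = ⁅(1 : ℂ) ⊗ₜ[ℝ] x, (1 : ℂ) ⊗ₜ[ℝ] y⁆ := by
    intro x y
    have e : ⁅(1 : ℂ) ⊗ₜ[ℝ] x, (1 : ℂ) ⊗ₜ[ℝ] y⁆ = ((1 : ℂ) * 1) ⊗ₜ[ℝ] ⁅x, y⁆ := rfl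
    rw [e, one_mul]
  refine ⟨{ toSubmodule := (Submodule.restrictScalars ℝ Eu).comap ((TensorProduct.mk ℝ ℂ 𝔤) 1),
            lie_mem' := ?_ },
          { toSubmodule := (Submodule.restrictScalars ℝ Es).comap ((TensorProduct.mk ℝ ℂ 𝔤) 1),
            lie_mem' := ?_ }, ?_, ?_, ?_, ?_, ?_, ?_⟩
  · intro x y hx hy
    show (1:ℂ) ⊗ₜ[ℝ] ⁅x, y⁆ ∈ Eu
    rw [hone]
    exact hbru _ hx _ hy
  · intro x y hx hy
    show (1:ℂ) ⊗ₜ[ℝ] ⁅x, y⁆ ∈ Es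
    rw [hone]
    exact hbrs _ hx _ hy
  · intro x; exact Iff.rfl
  · intro x; exact Iff.rfl
  · -- f-invariance of gu
    intro x hx
    have hx' : (1:ℂ) ⊗ₜ[ℝ] x ∈ Eu := hx
    show (1:ℂ) ⊗ₜ[ℝ] (f x) ∈ Eu
    rw [← hFone x]
    exact hFEu _ hx'
  · intro x hx
    have hx' : (1:ℂ) ⊗ₜ[ℝ] x ∈ Es := hx
    show (1:ℂ) ⊗ₜ[ℝ] (f x) ∈ Es
    rw [← hFone x]
    exact hFEs _ hx'
  · -- disjoint
    rw [Submodule.disjoint_def]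
    intro x hxu hxs
    have h0 : (1:ℂ) ⊗ₜ[ℝ] x = 0 :=
      Submodule.disjoint_def.mp hdisj _ hxu hxs
    rw [← auxjre_one_tmul x, h0, map_zero]
  · -- codisjoint
    rw [codisjoint_iff_le_sup]
    intro x _
    have hx : (1:ℂ) ⊗ₜ[ℝ] x ∈ Eu ⊔ Es := by rw [htop]; trivial
    obtain ⟨u, hu, s, hs, hsum⟩ := Submodule.mem_sup.mp hx
    have hfix : auxσ u + auxσ s = u + s := by
      rw [← map_add, hsum, auxσ_one_tmul]
    have hdiff : u - auxσ u = auxσ s - s := by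
      rw [sub_eq_sub_iff_add_eq_add, add_comm (auxσ s) (auxσ u), ← hfix]
    have hz1 : u - auxσ u ∈ Eu := Eu.sub_mem hu (hσEu u hu)
    have hz2 : u - auxσ u ∈ Es := by
      rw [hdiff]
      exact Es.sub_mem (hσEs s hs) hs
    have hzero : u - auxσ u = 0 := Submodule.disjoint_def.mp hdisj _ hz1 hz2
    have hσu : auxσ u = u := by
      have := sub_eq_zero.mp hzero
      exact this.symm
    have hσs : auxσ s = s := by
      have h2 : auxσ s - s = 0 := by rw [← hdiff, hzero]
      exact sub_eq_zero.mp h2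
    have hu' : u = (1:ℂ) ⊗ₜ[ℝ] (auxjre u) := aux_fixed_real hσu
    have hs' : s = (1:ℂ) ⊗ₜ[ℝ] (auxjre s) := aux_fixed_real hσs
    refine Submodule.mem_sup.mpr ⟨auxjre u, ?_, auxjre s, ?_, ?_⟩
    · show (1:ℂ) ⊗ₜ[ℝ] (auxjre u) ∈ Eu
      rw [← hu']; exact hu
    · show (1:ℂ) ⊗ₜ[ℝ] (auxjre s) ∈ Es
      rw [← hs']; exact hs
    · have := congrArg auxjre hsum
      rw [map_add, auxjre_one_tmul] at this
      exact this
end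

section
/- Let G be a group with normal subgroup P such that ΓP is dense in G for a subgroup Γ (with G a topological group). Let C_j be the lower central series, Γ_j = Γ ∩ C_j, P_j = P ∩ C_j. If Γ_j P_j is dense in C_j, then for x ∈ G and y ∈ C_j, the commutator [x, y] lies in the closure of Γ_{j+1} P_{j+1}, provided the commutator map is continuous and [AB, A_jB_j] ⊆ A_{j+1}B_{j+1} holds for A = Γ, B = P. -/
open Pointwise

/-- Let `G` be a topological group, `P` a normal subgroup and `Γ` a subgroup with
`ΓP` dense in `G`.  Let `C j` be the lower central series, `Γ_j = Γ ⊓ C j`,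
`P_j = P ⊓ C j`.  If `Γ_j P_j` is dense in `C j`, then for `x ∈ G` and `y ∈ C j`
the commutator `[x,y]` lies in the closure of `Γ_{j+1} P_{j+1}`, provided the
commutator inclusion `[AB, A_jB_j] ⊆ A_{j+1}B_{j+1}` holds for `A = Γ`, `B = P`
(the commutator map being continuous since `G` is a topological group). -/
theorem stmt19 {G : Type*} [Group G] [TopologicalSpace G] [IsTopologicalGroup G]
    (Γ P : Subgroup G) (hP : P.Normal)
    (hdense : Dense ((Γ : Set G) * (P : Set G))) (j : ℕ)
    (hdj : ((⊤ : Subgroup G).lowerCentralSeries j : Set G) ⊆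
      closure (((Γ ⊓ (⊤ : Subgroup G).lowerCentralSeries j : Subgroup G) : Set G) *
        ((P ⊓ (⊤ : Subgroup G).lowerCentralSeries j : Subgroup G) : Set G)))
    (hcomm : ∀ g ∈ (Γ : Set G) * (P : Set G),
      ∀ h ∈ ((Γ ⊓ (⊤ : Subgroup G).lowerCentralSeries j : Subgroup G) : Set G) *
          ((P ⊓ (⊤ : Subgroup G).lowerCentralSeries j : Subgroup G) : Set G),
        g * h * g⁻¹ * h⁻¹ ∈
          ((Γ ⊓ (⊤ : Subgroup G).lowerCentralSeries (j + 1) : Subgroup G) : Set G) *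
            ((P ⊓ (⊤ : Subgroup G).lowerCentralSeries (j + 1) : Subgroup G) : Set G)) :
    ∀ x : G, ∀ y ∈ (⊤ : Subgroup G).lowerCentralSeries j,
      x * y * x⁻¹ * y⁻¹ ∈
        closure (((Γ ⊓ (⊤ : Subgroup G).lowerCentralSeries (j + 1) : Subgroup G) : Set G) *
          ((P ⊓ (⊤ : Subgroup G).lowerCentralSeries (j + 1) : Subgroup G) : Set G)) := by
  intro x y hy
  have hx : x ∈ closure ((Γ : Set G) * (P : Set G)) := hdense x
  have hyc : y ∈ closure (((Γ ⊓ (⊤ : Subgroup G).lowerCentralSeries j : Subgroup G) : Set G) *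
      ((P ⊓ (⊤ : Subgroup G).lowerCentralSeries j : Subgroup G) : Set G)) := hdj hy
  exact map_mem_closure₂ (f := fun a b : G => a * b * a⁻¹ * b⁻¹)
    (by fun_prop) hx hyc hcomm
end
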